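/- Monotonicity of the balanced-partition gap: if an item a_{m+1} with 0 < a_{m+1} ≤ m*(a_1,...,a_m) is appended to a multiset of positive integers, then the minimum 2-partition gap of the enlarged multiset satisfies m*(a_1,...,a_m,a_{m+1}) = m*(a_1,...,a_m) − a_{m+1}. -/
import Mathlib


def income (m : ℕ) (a : Fin m → ℤ) (f : Fin m → Bool) (b : Bool) : ℤ :=
  ∑ i ∈ Finset.univ.filter (fun i => f i = b), a i

def gap (m : ℕ) (a : Fin m → ℤ) (f : Fin m → Bool) : ℕ :=
  (income m a f true - income m a f false).natAbs

noncomputable def mStar (m : ℕ) (a : Fin m → ℤ) : ℕ :=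
  sInf {g : ℕ | ∃ f : Fin m → Bool, g = gap m a f}

lemma income_eq (m : ℕ) (a : Fin m → ℤ) (f : Fin m → Bool) (b : Bool) :
    income m a f b = ∑ i, if f i = b then a i else 0 := by
  rw [income, Finset.sum_filter]

lemma income_snoc (m : ℕ) (a : Fin m → ℤ) (v : ℤ) (f : Fin (m + 1) → Bool) (b : Bool) :
    income (m + 1) (Fin.snoc a v) f b
      = income m a (f ∘ Fin.castSucc) b + (if f (Fin.last m) = b then v else 0) := by
  simp [income_eq, Fin.sum_univ_castSucc]

lemma diff_snoc (m : ℕ) (a : Fin m → ℤ) (v : ℤ) (f : Fin (m + 1) → Bool) :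
    income (m + 1) (Fin.snoc a v) f true - income (m + 1) (Fin.snoc a v) f false
      = income m a (f ∘ Fin.castSucc) true - income m a (f ∘ Fin.castSucc) false
        + (if f (Fin.last m) = true then v else -v) := by
  rw [income_snoc, income_snoc]
  cases h : f (Fin.last m) <;> simp [h] <;> ring

lemma gap_cast (m : ℕ) (a : Fin m → ℤ) (f : Fin m → Bool) :
    (gap m a f : ℤ) = |income m a f true - income m a f false| := by
  rw [gap, Int.abs_eq_natAbs]

lemma mStar_mem (m : ℕ) (a : Fin m → ℤ) : ∃ f, mStar m a = gap m a f := by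
  have hne : {g : ℕ | ∃ f : Fin m → Bool, g = gap m a f}.Nonempty :=
    ⟨gap m a (fun _ => true), ⟨fun _ => true, rfl⟩⟩
  exact Nat.sInf_mem hne

lemma mStar_le (m : ℕ) (a : Fin m → ℤ) (f : Fin m → Bool) : mStar m a ≤ gap m a f :=
  Nat.sInf_le ⟨f, rfl⟩

theorem mStar_append_small_item (m : ℕ) (a : Fin m → ℤ) (ha : ∀ i, 0 < a i)
    (v : ℤ) (hv : 0 < v) (hvle : v ≤ (mStar m a : ℤ)) :
    (mStar (m + 1) (Fin.snoc a v) : ℤ) = (mStar m a : ℤ) - v := by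
  obtain ⟨f₀, hf₀⟩ := mStar_mem m a
  set D₀ := income m a f₀ true - income m a f₀ false with hD₀
  have habs : (mStar m a : ℤ) = |D₀| := by rw [hf₀, gap_cast]
  -- Upper bound
  have hub : (mStar (m + 1) (Fin.snoc a v) : ℤ) ≤ (mStar m a : ℤ) - v := by
    set b : Bool := if 0 ≤ D₀ then false else true with hb
    set f : Fin (m + 1) → Bool := Fin.snoc f₀ b with hf
    have hcomp : f ∘ Fin.castSucc = f₀ := by
      funext i; simp [hf]
    have hlast : f (Fin.last m) = b := by simp [hf]
    have hdiff := diff_snoc m a v f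
    rw [hcomp, hlast] at hdiff
    have hgap : (gap (m + 1) (Fin.snoc a v) f : ℤ) = (mStar m a : ℤ) - v := by
      rw [gap_cast, hdiff, habs]
      rw [habs] at hvle
      by_cases h0 : 0 ≤ D₀
      · have hbf : b = false := by simp [hb, h0]
        rw [hbf]
        simp only [Bool.false_eq_true, if_false]
        rw [abs_of_nonneg h0] at hvle
        rw [abs_of_nonneg h0, abs_of_nonneg (by linarith : (0:ℤ) ≤ D₀ + -v)]
        ring
      · have hbt : b = true := by simp [hb, h0]
        rw [hbt]
        simp only [if_true]
        push_neg at h0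
        rw [abs_of_neg h0] at hvle
        rw [abs_of_neg h0, abs_of_nonpos (by linarith : D₀ + v ≤ 0)]
        ring
    rw [← hgap]
    exact_mod_cast mStar_le (m + 1) (Fin.snoc a v) f
  -- Lower bound
  have hlb : (mStar m a : ℤ) - v ≤ (mStar (m + 1) (Fin.snoc a v) : ℤ) := by
    obtain ⟨f, hf⟩ := mStar_mem (m + 1) (Fin.snoc a v)
    rw [hf, gap_cast, diff_snoc]
    set D := income m a (f ∘ Fin.castSucc) true - income m a (f ∘ Fin.castSucc) false with hD
    have hMD : (mStar m a : ℤ) ≤ |D| := by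
      rw [← gap_cast]
      exact_mod_cast mStar_le m a (f ∘ Fin.castSucc)
    set e : ℤ := if f (Fin.last m) = true then v else -v with he
    have hev : |e| = v := by
      by_cases h : f (Fin.last m) = true
      · simp [he, h, abs_of_pos hv]
      · simp [he, h, abs_of_pos hv]
    have htri : |D| ≤ |D + e| + |e| := by
      calc |D| = |(D + e) + (-e)| := by ring_nf
        _ ≤ |D + e| + |(-e)| := abs_add_le _ _
        _ = |D + e| + |e| := by rw [abs_neg]
    rw [hev] at htri
    linarith
  linarith
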